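/- Let W = {(A_i, B_i)} be an s-well-separated pair decomposition of a finite point set P ⊆ R^d with s > 1, and for each i choose representatives a_i ∈ A_i, b_i ∈ B_i; let G be the graph with edge set {a_i b_i}. Then G is connected and for all p, q ∈ P, the shortest path distance in G satisfies π(p,q) ≤ β·|pq| for some constant β depending only on s (in particular β = (s+1)/(s−1) works when each pair (A_i,B_i) has the form (B_r(a_i), B_r(b_i)) with r = |a_i b_i|/(2s+2)). -/
import Mathlib


/-- The Euclidean length of a polygonal path given by its list of vertices. -/
noncomputable def pathLength {X : Type*} [PseudoMetricSpace X] : List X → ℝ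
  | [] => 0
  | [_] => 0
  | a :: b :: t => dist a b + pathLength (b :: t)

lemma pathLength_append {X : Type*} [PseudoMetricSpace X] :
    ∀ (l1 l2 : List X) (x y : X), l1.getLast? = some x → l2.head? = some y →
      pathLength (l1 ++ l2) = pathLength l1 + dist x y + pathLength l2
  | [], _, _, _, h, _ => by simp at h
  | [u], l2, x, y, h1, h2 => by
    obtain ⟨t, rfl⟩ : ∃ t, l2 = y :: t := by
      cases l2 with
      | nil => simp at h2
      | cons z t => simp at h2; exact ⟨t, by rw [h2]⟩
    simp only [List.getLast?_singleton, Option.some.injEq] at h1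
    subst h1
    simp [pathLength]
  | u :: v :: t, l2, x, y, h1, h2 => by
    have h1' : (v :: t).getLast? = some x := by
      rw [← h1]; simp [List.getLast?_cons_cons]
    have := pathLength_append (v :: t) l2 x y h1' h2
    show pathLength (u :: v :: (t ++ l2)) = pathLength (u :: v :: t) + dist x y + pathLength l2
    simp only [pathLength]
    rw [List.cons_append] at this
    rw [this]; ring

/-- Let `{(A i, B i)}` be an `s`-WSPD (`s > 1`) of a finite set `P ⊆ ℝ^d`, in
which each pair has the form `(P ∩ B_{r i}(a i), P ∩ B_{r i}(b i))` with representatives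
`a i ∈ A i`, `b i ∈ B i` and `r i = dist (a i) (b i)/(2s+2)`. Let `G` be the graph on `P`
with one edge `(a i, b i)` per pair. Then `G` is connected and for all `p, q ∈ P` the
shortest-path distance satisfies `π(p,q) ≤ β · dist p q` with `β = (s+1)/(s-1)`. -/
theorem stmt13 {d : ℕ} {ι : Type*} [Fintype ι]
    (P : Set (EuclideanSpace ℝ (Fin d))) (hP : P.Finite)
    (s : ℝ) (hs : 1 < s)
    (A B : ι → Set (EuclideanSpace ℝ (Fin d))) (a b : ι → EuclideanSpace ℝ (Fin d))
    (ha : ∀ i, a i ∈ A i) (hb : ∀ i, b i ∈ B i)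
    (haP : ∀ i, a i ∈ P) (hbP : ∀ i, b i ∈ P)
    (hform : ∀ i, A i = P ∩ Metric.closedBall (a i) (dist (a i) (b i) / (2 * s + 2)) ∧
                   B i = P ∩ Metric.closedBall (b i) (dist (a i) (b i) / (2 * s + 2)))
    (hwellsep : ∀ i, ∀ x ∈ A i, ∀ y ∈ B i,
      s * max (Metric.diam (A i)) (Metric.diam (B i)) ≤ dist x y)
    (hcover : ∀ p ∈ P, ∀ q ∈ P, p ≠ q → ∃ i, p ∈ A i ∧ q ∈ B i) :
    ∀ p ∈ P, ∀ q ∈ P, ∃ l : List (EuclideanSpace ℝ (Fin d)),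
      l.head? = some p ∧ l.getLast? = some q ∧
      l.Chain' (fun x y => ∃ i, (x = a i ∧ y = b i) ∨ (x = b i ∧ y = a i)) ∧
      pathLength l ≤ (s + 1) / (s - 1) * dist p q := by
  classical
  set F := hP.toFinset with hF
  set Dset := (F ×ˢ F).image (fun z => dist z.1 z.2) with hDset
  suffices key : ∀ n : ℕ, ∀ p ∈ P, ∀ q ∈ P,
      ((Dset.filter (fun t => t < dist p q)).card ≤ n) →
      ∃ l : List (EuclideanSpace ℝ (Fin d)),
      l.head? = some p ∧ l.getLast? = some q ∧
      l.Chain' (fun x y => ∃ i, (x = a i ∧ y = b i) ∨ (x = b i ∧ y = a i)) ∧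
      pathLength l ≤ (s + 1) / (s - 1) * dist p q by
    intro p hp q hq
    exact key _ p hp q hq le_rfl
  intro n
  induction n using Nat.strong_induction_on with
  | _ n IH =>
    intro p hp q hq hcard
    by_cases hpq : p = q
    · subst hpq
      exact ⟨[p], rfl, rfl, List.isChain_singleton p, by simp [pathLength]⟩
    · obtain ⟨i, hpA, hqB⟩ := hcover p hp q hq hpq
      obtain ⟨hAi, hBi⟩ := hform i
      set r := dist (a i) (b i) / (2 * s + 2) with hr
      have h2s : (0:ℝ) < 2 * s + 2 := by linarith
      have hrD : r * (2 * s + 2) = dist (a i) (b i) := by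
        rw [hr]; field_simp
      have hpr : dist p (a i) ≤ r := by
        have := (hAi ▸ hpA).2
        rwa [Metric.mem_closedBall] at this
      have hqr : dist q (b i) ≤ r := by
        have := (hBi ▸ hqB).2
        rwa [Metric.mem_closedBall] at this
      have hdpq : 0 < dist p q := dist_pos.mpr hpq
      have hrnn : 0 ≤ r := le_trans dist_nonneg hpr
      have htri : dist (a i) (b i) ≤ r + dist p q + r := by
        have h4 := dist_triangle4 (a i) p q (b i)
        have : dist (a i) p = dist p (a i) := dist_comm _ _
        linarith [h4, hpr, hqr, this.symm ▸ hpr]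
      -- key inequality: 2 r s ≤ dist p q
      have hkey : 2 * r * s ≤ dist p q := by nlinarith [htri, hrD]
      have hrlt : r < dist p q := by nlinarith [hkey, hdpq, hrnn, hs]
      have hpalt : dist p (a i) < dist p q := lt_of_le_of_lt hpr hrlt
      have hbqlt : dist (b i) q < dist p q := by
        rw [dist_comm]; exact lt_of_le_of_lt hqr hrlt
      -- card decrease for (p, a i)
      have hmemF : ∀ x ∈ P, x ∈ F := fun x hx => hP.mem_toFinset.mpr hx
      have hcard1 : (Dset.filter (fun t => t < dist p (a i))).card < n := by
        have hsub : (Dset.filter (fun t => t < dist p (a i))) ⊂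
            (Dset.filter (fun t => t < dist p q)) := by
          constructor
          · intro t ht
            simp only [Finset.mem_filter] at ht ⊢
            exact ⟨ht.1, lt_trans ht.2 hpalt⟩
          · intro hcontra
            have hmem : dist p (a i) ∈ Dset.filter (fun t => t < dist p q) := by
              refine Finset.mem_filter.mpr ⟨?_, hpalt⟩
              exact Finset.mem_image.mpr ⟨(p, a i),
                Finset.mem_product.mpr ⟨hmemF p hp, hmemF _ (haP i)⟩, rfl⟩
            have := Finset.mem_filter.mp (hcontra hmem)
            exact lt_irrefl _ this.2
        exact lt_of_lt_of_le (Finset.card_lt_card hsub) hcard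
      have hcard2 : (Dset.filter (fun t => t < dist (b i) q)).card < n := by
        have hsub : (Dset.filter (fun t => t < dist (b i) q)) ⊂
            (Dset.filter (fun t => t < dist p q)) := by
          constructor
          · intro t ht
            simp only [Finset.mem_filter] at ht ⊢
            exact ⟨ht.1, lt_trans ht.2 hbqlt⟩
          · intro hcontra
            have hmem : dist (b i) q ∈ Dset.filter (fun t => t < dist p q) := by
              refine Finset.mem_filter.mpr ⟨?_, hbqlt⟩
              exact Finset.mem_image.mpr ⟨(b i, q),
                Finset.mem_product.mpr ⟨hmemF _ (hbP i), hmemF q hq⟩, rfl⟩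
            have := Finset.mem_filter.mp (hcontra hmem)
            exact lt_irrefl _ this.2
        exact lt_of_lt_of_le (Finset.card_lt_card hsub) hcard
      obtain ⟨l1, hl1h, hl1l, hl1c, hl1len⟩ :=
        IH _ hcard1 p hp (a i) (haP i) le_rfl
      obtain ⟨l2, hl2h, hl2l, hl2c, hl2len⟩ :=
        IH _ hcard2 (b i) (hbP i) q hq le_rfl
      have hl1ne : l1 ≠ [] := by intro h; rw [h] at hl1h; simp at hl1h
      have hl2ne : l2 ≠ [] := by intro h; rw [h] at hl2h; simp at hl2h
      refine ⟨l1 ++ l2, ?_, ?_, ?_, ?_⟩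
      · rw [List.head?_append_of_ne_nil l1 hl1ne]; exact hl1h
      · rw [List.getLast?_append_of_ne_nil l1 hl2ne]; exact hl2l
      · refine List.IsChain.append hl1c hl2c ?_
        intro x hx y hy
        rw [hl1l] at hx; rw [hl2h] at hy
        simp only [Option.mem_some_iff] at hx hy
        subst hx; subst hy
        exact ⟨i, Or.inl ⟨rfl, rfl⟩⟩
      · rw [pathLength_append l1 l2 (a i) (b i) hl1l hl2h]
        -- pathLength l1 ≤ β * dist p (a i) ≤ β * r, similarly l2
        have hs1 : (0:ℝ) < s - 1 := by linarith
        have hβpos : (0:ℝ) ≤ (s + 1) / (s - 1) := by positivity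
        have h1 : pathLength l1 ≤ (s + 1) / (s - 1) * r :=
          le_trans hl1len (by exact mul_le_mul_of_nonneg_left hpr hβpos)
        have h2 : pathLength l2 ≤ (s + 1) / (s - 1) * r := by
          refine le_trans hl2len ?_
          rw [dist_comm]
          exact mul_le_mul_of_nonneg_left hqr hβpos
        have hβ : (s + 1) / (s - 1) * (s - 1) = s + 1 := by field_simp
        nlinarith [h1, h2, hkey, hrD, hβ, hrnn, hdpq, hβpos]
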